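/- arXiv:1911.06109 — 3 statements merged into one kernel-verified Lean document; each statement's English description precedes it below -/
import Mathlib

section
/- Let A and B be L-structures such that T_u*(A) ⊆ T_u*(B). Then the union Diag⁺(A) ∪ Diag⁺(B) of their positive diagrams is consistent in the language L(A ∪ B): there exists an L-structure D with homomorphisms from both A and B into D. -/
open FirstOrder FirstOrder.Language

universe u v w w'

namespace PositiveLogic

/-- Positive formulas with `n` free variables: built from `⊥`, atomic formulas,
`∧`, `∨` and `∃`. -/
inductive PosForm (L : FirstOrder.Language.{u, v}) : ℕ → Type (max u v)
  | falsum {n : ℕ} : PosForm L n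
  | equal {n : ℕ} (t u : L.Term (Fin n)) : PosForm L n
  | rel {n l : ℕ} (R : L.Relations l) (ts : Fin l → L.Term (Fin n)) : PosForm L n
  | and {n : ℕ} (φ ψ : PosForm L n) : PosForm L n
  | or {n : ℕ} (φ ψ : PosForm L n) : PosForm L n
  | ex {n : ℕ} (φ : PosForm L (n + 1)) : PosForm L n

variable {L : FirstOrder.Language.{u, v}}

/-- Realization of a positive formula in a structure. -/
def PosForm.Realize {M : Type w} [L.Structure M] :
    ∀ {n : ℕ}, PosForm L n → (Fin n → M) → Prop
  | _, .falsum, _ => False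
  | _, .equal t u, v => t.realize v = u.realize v
  | _, .rel R ts, v => Structure.RelMap R fun i => (ts i).realize v
  | _, .and φ ψ, v => φ.Realize v ∧ ψ.Realize v
  | _, .or φ ψ, v => φ.Realize v ∨ ψ.Realize v
  | _, .ex φ, v => ∃ x : M, φ.Realize (Fin.snoc v x)

/-- A positive sentence `φ` (element of `PosForm L 0`) holds in `M`. -/
def PosRealize (M : Type w) [L.Structure M] (φ : PosForm L 0) : Prop :=
  φ.Realize (Fin.elim0 : Fin 0 → M)

/-- `Diag⁺*(M)`: the set of positive `L`-sentences true in `M`. -/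
def posTheory (M : Type w) [L.Structure M] : Set (PosForm L 0) :=
  {φ | PosRealize M φ}

/-- `T_u*(M)`, identified with the set of positive `L`-sentences whose negation
(an h-universal sentence) is true in `M`. -/
def TuStar (M : Type w) [L.Structure M] : Set (PosForm L 0) :=
  {φ | ¬ PosRealize M φ}

/-- A basic h-inductive sentence `∀ x̄ (φ(x̄) → ψ(x̄))` with `φ, ψ` positive.
(A general h-inductive sentence, a finite conjunction of such, is equivalent to
the set of its conjuncts.) -/
structure HInd (L : FirstOrder.Language.{u, v}) : Type (max u v) where
  n : ℕ
  hyp : PosForm L n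
  concl : PosForm L n

/-- Realization of a basic h-inductive sentence. -/
def HInd.Realize (s : HInd L) (M : Type w) [L.Structure M] : Prop :=
  ∀ v : Fin s.n → M, s.hyp.Realize v → s.concl.Realize v

/-- `M` is a model of the h-inductive theory `T`. -/
def HModels (M : Type w) [L.Structure M] (T : Set (HInd L)) : Prop :=
  ∀ s ∈ T, s.Realize M

/-- `T_i*(M)`: the set of (basic) h-inductive `L`-sentences true in `M`. -/
def TiStar (M : Type w) [L.Structure M] : Set (HInd L) :=
  {s | s.Realize M}

/-- `T_u(T)`: the h-universal consequences of `T`, identified with the set of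
positive sentences `φ` such that `¬φ` holds in every model of `T`. -/
def TuOf (T : Set (HInd L)) : Set (PosForm L 0) :=
  {φ | ∀ (M : Type (max u v)) [L.Structure M], HModels M T → ¬ PosRealize M φ}

/-- A homomorphism is an immersion if it preserves and reflects all positive
formulas. -/
def IsImmersion {A : Type w} {B : Type w'} [L.Structure A] [L.Structure B]
    (f : A →[L] B) : Prop :=
  ∀ {n : ℕ} (φ : PosForm L n) (v : Fin n → A), φ.Realize v ↔ φ.Realize (f ∘ v)

/-- A homomorphism `f : A → B` is a strong immersion if `B`, with parameters
from `A` interpreted via `f`, models `T_i(A)`, the full h-inductive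
`L(A)`-theory of `A`. -/
def IsStrongImmersion {A : Type w} {B : Type w'} [L.Structure A] [L.Structure B]
    (f : A →[L] B) : Prop :=
  ∀ {n m : ℕ} (φ ψ : PosForm L (n + m)) (a : Fin m → A),
    (∀ v : Fin n → A, φ.Realize (Fin.append v a) → ψ.Realize (Fin.append v a)) →
    ∀ v : Fin n → B, φ.Realize (Fin.append v (f ∘ a)) → ψ.Realize (Fin.append v (f ∘ a))

/-- `M` is a positively closed (pc) model of `T`: it models `T` and every
homomorphism from `M` into a model of `T` is an immersion. -/
def IsPC (T : Set (HInd L)) (M : Type (max u v)) [L.Structure M] : Prop :=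
  HModels M T ∧
    ∀ (N : Type (max u v)) [L.Structure N], HModels N T → ∀ f : M →[L] N, IsImmersion f

/-- `T` has the joint continuation property (is positively complete). -/
def JCP (T : Set (HInd L)) : Prop :=
  ∀ (A : Type (max u v)) [L.Structure A] (B : Type (max u v)) [L.Structure B],
    HModels A T → HModels B T →
      ∃ (C : Type (max u v)) (_ : L.Structure C),
        HModels C T ∧ Nonempty (A →[L] C) ∧ Nonempty (B →[L] C)

/-- `T₁` and `T₂` are `T`-complete. -/
def TComplete (T₁ T₂ T : Set (HInd L)) : Prop :=
  ∀ (A : Type (max u v)) [L.Structure A] (B : Type (max u v)) [L.Structure B],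
    HModels A T₁ → HModels B T₂ →
      ∃ (C : Type (max u v)) (_ : L.Structure C),
        HModels C T ∧ Nonempty (A →[L] C) ∧ Nonempty (B →[L] C)

/-!
Since `T_u*(A) ⊆ T_u*(B)`, every positive sentence true in `B` is true in `A`. A finite part of
`Diag⁺(B)`, its parameters renamed to distinct variables and existentially closed, is such a
sentence, so `Diag⁺(B)` is finitely satisfiable in `A`. An ultrapower of `A` indexed by the finite
parts of `Diag⁺(B)` therefore receives a homomorphism from `B`, besides the diagonal one from `A`.
-/

namespace PosForm

def relabel : ∀ {n m : ℕ}, (Fin n → Fin m) → PosForm L n → PosForm L m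
  | _, _, _, .falsum => .falsum
  | _, _, ρ, .equal t u => .equal (t.relabel ρ) (u.relabel ρ)
  | _, _, ρ, .rel R ts => .rel R fun i => (ts i).relabel ρ
  | _, _, ρ, .and φ ψ => .and (relabel ρ φ) (relabel ρ ψ)
  | _, _, ρ, .or φ ψ => .or (relabel ρ φ) (relabel ρ ψ)
  | _, _, ρ, .ex φ => .ex (relabel (Fin.lastCases (Fin.last _) (Fin.castSucc ∘ ρ)) φ)

theorem realize_relabel {M : Type w} [L.Structure M] :
    ∀ {n m : ℕ} (ρ : Fin n → Fin m) (φ : PosForm L n) (v : Fin m → M),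
      (φ.relabel ρ).Realize v ↔ φ.Realize (v ∘ ρ)
  | _, _, _, .falsum, _ => Iff.rfl
  | _, _, ρ, .equal t u, v => by simp [relabel, PosForm.Realize, Term.realize_relabel]
  | _, _, ρ, .rel R ts, v => by simp [relabel, PosForm.Realize, Term.realize_relabel]
  | _, _, ρ, .and φ ψ, v => and_congr (realize_relabel ρ φ v) (realize_relabel ρ ψ v)
  | _, _, ρ, .or φ ψ, v => or_congr (realize_relabel ρ φ v) (realize_relabel ρ ψ v)
  | _, _, ρ, .ex φ, v => exists_congr fun x => by
      have hsnoc : Fin.snoc v x ∘ Fin.lastCases (Fin.last _) (Fin.castSucc ∘ ρ) =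
          Fin.snoc (v ∘ ρ) x := by
        funext i
        induction i using Fin.lastCases <;> simp
      rw [realize_relabel, hsnoc]

def exCl : ∀ {n : ℕ}, PosForm L n → PosForm L 0
  | 0, φ => φ
  | _ + 1, φ => exCl φ.ex

theorem posRealize_exCl {M : Type w} [L.Structure M] :
    ∀ {n : ℕ} (φ : PosForm L n), PosRealize M (exCl φ) ↔ ∃ v : Fin n → M, φ.Realize v
  | 0, φ => by
      rw [Unique.exists_iff, Subsingleton.elim default Fin.elim0]
      rfl
  | n + 1, φ => by
      rw [exCl, posRealize_exCl φ.ex]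
      refine ⟨fun ⟨v, x, hx⟩ => ⟨_, hx⟩, fun ⟨v, hv⟩ => ⟨Fin.init v, v (Fin.last n), ?_⟩⟩
      rwa [Fin.snoc_init_self]

end PosForm

/-- `Diag⁺(M)`: an element is a positive `L(M)`-sentence true in `M`, given as a positive
formula together with the tuple of parameters that satisfies it. -/
structure PosDiag (L : FirstOrder.Language.{u, v}) (M : Type w) [L.Structure M] :
    Type (max u v w) where
  {n : ℕ}
  formula : PosForm L n
  params : Fin n → M
  realize : formula.Realize params

namespace PosDiag

variable {M : Type w} {N : Type w'} [L.Structure M] [L.Structure N]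

def HoldsAlong (p : PosDiag L M) (g : M → N) : Prop :=
  p.formula.Realize (g ∘ p.params)

def and (p q : PosDiag L M) : PosDiag L M where
  formula := (p.formula.relabel (Fin.castAdd q.n)).and (q.formula.relabel (Fin.natAdd p.n))
  params := Fin.append p.params q.params
  realize := by
    refine ⟨(PosForm.realize_relabel _ _ _).2 ?_, (PosForm.realize_relabel _ _ _).2 ?_⟩
    · simpa [Function.comp_def] using p.realize
    · simpa [Function.comp_def] using q.realize

theorem holdsAlong_and {p q : PosDiag L M} {g : M → N} :
    (p.and q).HoldsAlong g ↔ p.HoldsAlong g ∧ q.HoldsAlong g := by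
  simp [HoldsAlong, PosDiag.and, PosForm.Realize, PosForm.realize_relabel, Function.comp_def]

def funMap {n : ℕ} (f : L.Functions n) (x : Fin n → M) : PosDiag L M where
  formula := .equal (.func f fun i => .var i.castSucc) (.var (Fin.last n))
  params := Fin.snoc x (Structure.funMap f x)
  realize := by simp [PosForm.Realize]

theorem holdsAlong_funMap_iff {n : ℕ} {f : L.Functions n} {x : Fin n → M} {g : M → N} :
    (funMap f x).HoldsAlong g ↔ Structure.funMap f (g ∘ x) = g (Structure.funMap f x) := by
  simp [HoldsAlong, funMap, PosForm.Realize, Function.comp_def]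

def relMap {n : ℕ} (r : L.Relations n) (x : Fin n → M) (hx : Structure.RelMap r x) :
    PosDiag L M where
  formula := .rel r .var
  params := x
  realize := hx

end PosDiag

section Ultraproduct

variable {M : Type w} {N : Type w'} [L.Structure M] [L.Structure N]

def homToUltrapower {I : Type*} (U : Ultrafilter I) (g : I → M → N)
    (hg : ∀ p : PosDiag L M, ∀ᶠ i in U, p.HoldsAlong (g i)) :
    M →[L] (U : Filter I).Product fun _ => N where
  toFun x := ((fun i => g i x : I → N) : (U : Filter I).Product fun _ => N)
  map_fun' {n} f x := by
    refine Eq.trans (Quotient.sound' ?_) (Ultraproduct.funMap_cast f fun j i => g i (x j)).symm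
    filter_upwards [hg (.funMap f x)] with i hi
    exact (PosDiag.holdsAlong_funMap_iff.1 hi).symm
  map_rel' {n} r x hx :=
    (relMap_quotient_mk' _ r fun j i => g i (x j)).2 <| by
      filter_upwards [hg (.relMap r x hx)] with i hi
      exact hi

end Ultraproduct

section Compactness

variable {A : Type w} {B : Type w'} [L.Structure A] [L.Structure B]

theorem posTheory_subset_of_TuStar_subset (h : TuStar (L := L) A ⊆ TuStar (L := L) B) :
    posTheory (L := L) B ⊆ posTheory (L := L) A :=
  fun _ hB => by_contra fun hA => h hA hB

variable (hAB : posTheory (L := L) B ⊆ posTheory (L := L) A)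
include hAB

theorem exists_realize_of_posTheory_subset {n : ℕ} (φ : PosForm L n) (b : Fin n → B)
    (hb : φ.Realize b) : ∃ a : Fin n → A, φ.Realize a :=
  (PosForm.posRealize_exCl φ).1 <| hAB <| (PosForm.posRealize_exCl φ).2 ⟨b, hb⟩

theorem nonempty_fun_of_posTheory_subset : Nonempty (B → A) := by
  rcases isEmpty_or_nonempty B with hB | ⟨⟨b⟩⟩
  · exact ⟨isEmptyElim⟩
  · obtain ⟨a, -⟩ := exists_realize_of_posTheory_subset hAB
      (.equal (.var 0) (.var 0) : PosForm L 1) (fun _ => b) rfl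
    exact ⟨fun _ => a 0⟩

theorem PosDiag.exists_holdsAlong_of_posTheory_subset (p : PosDiag L B) :
    ∃ g : B → A, p.HoldsAlong g := by
  classical
  -- rename the parameters injectively, so that a witness in `A` extends to a map `B → A`
  let e := Fintype.equivFin (Set.range p.params)
  let ρ : Fin p.n → Fin _ := e ∘ Set.rangeFactorization p.params
  let c : Fin _ → B := Subtype.val ∘ e.symm
  have hcρ : c ∘ ρ = p.params := by
    funext j
    simp [c, ρ, Set.rangeFactorization_coe]
  have hc : c.Injective := Subtype.val_injective.comp e.symm.injective
  obtain ⟨v, hv⟩ := exists_realize_of_posTheory_subset hAB (p.formula.relabel ρ) c <| by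
    rw [PosForm.realize_relabel, hcρ]
    exact p.realize
  obtain ⟨g₀⟩ := nonempty_fun_of_posTheory_subset hAB
  refine ⟨Function.extend c v g₀, ?_⟩
  have hext : Function.extend c v g₀ ∘ p.params = v ∘ ρ := by
    funext j
    simp only [← congrFun hcρ j, Function.comp_apply, hc.extend_apply]
  rw [HoldsAlong, hext, ← PosForm.realize_relabel]
  exact hv

theorem PosDiag.exists_holdsAlong_and_finset_of_posTheory_subset (q : PosDiag L B)
    (s : Finset (PosDiag L B)) : ∃ g : B → A, q.HoldsAlong g ∧ ∀ p ∈ s, p.HoldsAlong g := by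
  classical
  induction s using Finset.induction_on generalizing q with
  | empty => simpa using q.exists_holdsAlong_of_posTheory_subset hAB
  | insert p s _ ih =>
    obtain ⟨g, hqp, hs⟩ := ih (q.and p)
    rw [PosDiag.holdsAlong_and] at hqp
    exact ⟨g, hqp.1, by simpa [hqp.2] using hs⟩

theorem exists_holdsAlong_finset_of_posTheory_subset (s : Finset (PosDiag L B)) :
    ∃ g : B → A, ∀ p ∈ s, p.HoldsAlong g := by
  rcases s.eq_empty_or_nonempty with rfl | ⟨q, -⟩
  · obtain ⟨g⟩ := nonempty_fun_of_posTheory_subset hAB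
    exact ⟨g, by simp⟩
  · exact (q.exists_holdsAlong_and_finset_of_posTheory_subset hAB s).imp fun _ hg => hg.2

theorem exists_ultrafilter_eventually_holdsAlong_of_posTheory_subset :
    ∃ (I : Type (max u v w')) (U : Ultrafilter I) (g : I → B → A),
      ∀ p : PosDiag L B, ∀ᶠ i in U, p.HoldsAlong (g i) := by
  choose g hg using exists_holdsAlong_finset_of_posTheory_subset hAB
  refine ⟨_, .of Filter.atTop, g, fun p => ?_⟩
  filter_upwards [Ultrafilter.of_le _ (Filter.eventually_ge_atTop {p})] with s hs
  exact hg s p (Finset.singleton_subset_iff.1 hs)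

end Compactness

/-- if `T_u*(A) ⊆ T_u*(B)` then `Diag⁺(A) ∪ Diag⁺(B)` is consistent,
i.e. there is a common continuation of `A` and `B`. -/
theorem common_continuation_of_TuStar_subset (A : Type w) (B : Type w')
    [L.Structure A] [L.Structure B] (h : TuStar (L := L) A ⊆ TuStar (L := L) B) :
    ∃ (D : Type (max u v w w')) (_ : L.Structure D),
      Nonempty (A →[L] D) ∧ Nonempty (B →[L] D) := by
  obtain ⟨I, U, g, hg⟩ :=
    exists_ultrafilter_eventually_holdsAlong_of_posTheory_subset
      (posTheory_subset_of_TuStar_subset h)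
  exact ⟨_, inferInstance,
    ⟨homToUltrapower U (fun _ => id) fun p => .of_forall fun _ => p.realize⟩,
    ⟨homToUltrapower U g hg⟩⟩

end PositiveLogic
end

section
/- Let T be an h-inductive theory and A a pc model of T. Then every pc model of the theory T_i*(A) is a pc model of T, and every pc model of T that models T_i*(A) is a pc model of T_i*(A). -/
open FirstOrder FirstOrder.Language

universe u v w w'

namespace PositiveLogic

variable {L : FirstOrder.Language.{u, v}}

/-!
Part two holds because `T ⊆ T_i*(A)`. Part one rests on a continuation lemma: if every positive
sentence true in `P` is true in `M`, then `P` maps homomorphically into an ultrapower of `M`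
(each finite piece of the positive diagram of `P` is an existential positive sentence, hence
realized in `M`). Consequently, if `Q` is a pc model of `S`, `M ⊨ S` and `Th⁺(Q) ⊆ Th⁺(M)`, then
`Th⁺(M) ⊆ Th⁺(Q)`. Given a pc model `B` of `T_i*(A)` and `f : B → N` with `N ⊨ T`, this yields
first `Th⁺(A) = Th⁺(B)` and then `Th⁺(N) ⊆ Th⁺(A)`, so `N` continues into a model `D` of
`T_i*(A)`. The composite `B → N → D` is an immersion, hence so is `f`.
-/

open Structure

section Semantics

variable {M : Type w} {N : Type w'} [L.Structure M] [L.Structure N]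

theorem PosForm.realize_iff_posRealize (φ : PosForm L 0) (v : Fin 0 → M) :
    φ.Realize v ↔ PosRealize M φ := by
  rw [Subsingleton.elim v Fin.elim0]; rfl

theorem PosForm.realize_comp_hom (f : M →[L] N) {n : ℕ} (φ : PosForm L n) {v : Fin n → M} :
    φ.Realize v → φ.Realize (f ∘ v) := by
  induction φ with
  | falsum => exact id
  | equal t u => simp only [PosForm.Realize, HomClass.realize_term]; exact congrArg f
  | rel R ts =>
    simp only [PosForm.Realize, HomClass.realize_term]
    exact f.map_rel R _
  | and _ _ ihφ ihψ => exact And.imp ihφ ihψ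
  | or _ _ ihφ ihψ => exact Or.imp ihφ ihψ
  | ex _ ih => exact fun ⟨x, hx⟩ => ⟨f x, Fin.comp_snoc f v x ▸ ih hx⟩

theorem posTheory_subset_of_hom (f : M →[L] N) : posTheory (L := L) M ⊆ posTheory N :=
  fun σ hσ => (σ.realize_iff_posRealize _).1 (σ.realize_comp_hom f hσ)

theorem IsImmersion.posTheory_subset {f : M →[L] N} (hf : IsImmersion f) :
    posTheory (L := L) N ⊆ posTheory M :=
  fun σ hσ => (hf σ Fin.elim0).2 ((σ.realize_iff_posRealize _).2 hσ)

theorem IsImmersion.of_comp {K : Type*} [L.Structure K] (f : M →[L] N) (g : N →[L] K)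
    (hgf : IsImmersion (g.comp f)) : IsImmersion f :=
  fun φ v => ⟨φ.realize_comp_hom f, fun h => (hgf φ v).2 (φ.realize_comp_hom g h)⟩

def PosForm.exs : ∀ {n : ℕ}, PosForm L n → PosForm L 0
  | 0, φ => φ
  | _ + 1, φ => φ.ex.exs

theorem PosForm.realize_exs {n : ℕ} (φ : PosForm L n) :
    PosRealize M φ.exs ↔ ∃ v : Fin n → M, φ.Realize v := by
  induction n with
  | zero => exact ⟨fun h => ⟨Fin.elim0, h⟩, fun ⟨v, hv⟩ => (φ.realize_iff_posRealize v).1 hv⟩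
  | succ n ih =>
    rw [PosForm.exs, ih]
    exact ⟨fun ⟨v, x, hx⟩ => ⟨Fin.snoc v x, hx⟩,
      fun ⟨v, hv⟩ => ⟨Fin.init v, v (Fin.last n), by rwa [Fin.snoc_init_self]⟩⟩

theorem PosForm.realize_foldr_and {n : ℕ} (l : List (PosForm L n)) (ψ : PosForm L n)
    (v : Fin n → M) :
    (l.foldr PosForm.and ψ).Realize v ↔ (∀ φ ∈ l, φ.Realize v) ∧ ψ.Realize v := by
  induction l with
  | nil => simp
  | cons φ l ih => simp [PosForm.Realize, ih, and_assoc]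

theorem exists_realize_of_posTheory_subset_s14 (h : posTheory (L := L) M ⊆ posTheory N) {n : ℕ}
    {φ : PosForm L n} {v : Fin n → M} (hv : φ.Realize v) : ∃ w : Fin n → N, φ.Realize w :=
  φ.realize_exs.1 (h (φ.realize_exs.2 ⟨v, hv⟩))

theorem posTheory_subset_of_models_TiStar (h : HModels N (TiStar (L := L) M)) :
    posTheory (L := L) N ⊆ posTheory M := fun σ hσ => by
  by_contra hM
  exact h ⟨0, σ, .falsum⟩ (fun v hv => hM ((σ.realize_iff_posRealize v).1 hv)) Fin.elim0 hσ

end Semantics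

theorem HModels.mono {M : Type w} [L.Structure M] {T T' : Set (HInd L)} (h : HModels M T')
    (hT : T ⊆ T') : HModels M T :=
  fun s hs => h s (hT hs)

theorem IsPC.of_subset {T T' : Set (HInd L)} {M : Type (max u v)} [L.Structure M] (hM : IsPC T M)
    (hT : T ⊆ T') (hM' : HModels M T') : IsPC T' M :=
  ⟨hM', fun N _ hN f => hM.2 N (hN.mono hT) f⟩

section Ultraproduct

def PosForm.toBoundedFormula : ∀ {n : ℕ}, PosForm L n → L.BoundedFormula Empty n
  | _, .falsum => ⊥
  | _, .equal t u => (t.relabel Sum.inr).bdEqual (u.relabel Sum.inr)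
  | _, .rel R ts => R.boundedFormula fun i => (ts i).relabel Sum.inr
  | _, .and φ ψ => φ.toBoundedFormula ⊓ ψ.toBoundedFormula
  | _, .or φ ψ => φ.toBoundedFormula ⊔ ψ.toBoundedFormula
  | _, .ex φ => φ.toBoundedFormula.ex

theorem PosForm.realize_toBoundedFormula {M : Type w} [L.Structure M] {n : ℕ} (φ : PosForm L n)
    (e : Empty → M) (v : Fin n → M) : φ.toBoundedFormula.Realize e v ↔ φ.Realize v := by
  induction φ with
  | falsum => simp [toBoundedFormula, PosForm.Realize]
  | equal t u => simp [toBoundedFormula, PosForm.Realize, Term.realize_relabel]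
  | rel R ts => simp [toBoundedFormula, PosForm.Realize, Term.realize_relabel]
  | and _ _ ihφ ihψ => simp [toBoundedFormula, PosForm.Realize, ihφ, ihψ]
  | or _ _ ihφ ihψ => simp [toBoundedFormula, PosForm.Realize, ihφ, ihψ]
  | ex _ ih => simp [toBoundedFormula, PosForm.Realize, ih]

variable {I : Type*} (U : Ultrafilter I) (M : Type w) [L.Structure M] [Nonempty M]

theorem PosForm.realize_ultrapower {n : ℕ} (φ : PosForm L n) (v : Fin n → I → M) :
    φ.Realize (M := (U : Filter I).Product fun _ => M) (fun j => v j) ↔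
      ∀ᶠ i in (U : Filter I), φ.Realize fun j => v j i := by
  refine (φ.realize_toBoundedFormula
    (fun e => ((isEmptyElim e : I → M) : (U : Filter I).Product fun _ => M)) _).symm.trans ?_
  refine (Ultraproduct.boundedFormula_realize_cast (L := L) (M := fun _ : I => M)
    φ.toBoundedFormula isEmptyElim v).trans ?_
  simp only [PosForm.realize_toBoundedFormula]

theorem posRealize_ultrapower_iff (σ : PosForm L 0) :
    PosRealize ((U : Filter I).Product fun _ => M) σ ↔ PosRealize M σ := by
  refine (σ.realize_iff_posRealize _).symm.trans ((σ.realize_ultrapower U M Fin.elim0).trans ?_)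
  simp only [σ.realize_iff_posRealize, Filter.eventually_const]

theorem HInd.realize_ultrapower {s : HInd L} (hs : s.Realize M) :
    s.Realize ((U : Filter I).Product fun _ => M) := by
  intro v hv
  obtain ⟨w, rfl⟩ : ∃ w : Fin s.n → I → M,
      (fun j => w j : Fin s.n → (U : Filter I).Product fun _ => M) = v :=
    ⟨fun j => (v j).out, funext fun j => Quotient.out_eq (v j)⟩
  rw [PosForm.realize_ultrapower] at hv ⊢
  exact hv.mono fun i => hs _

end Ultraproduct

section Continuation

inductive DiagramFact (L : FirstOrder.Language.{u, v}) (P : Type w) [L.Structure P] :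
    Type (max u v w)
  | fn {l : ℕ} (f : L.Functions l) (x : Fin l → P) : DiagramFact L P
  | rel {l : ℕ} (R : L.Relations l) (x : Fin l → P) (h : RelMap R x) : DiagramFact L P

namespace DiagramFact

variable {P : Type w} [L.Structure P]

def Holds {M : Type w'} [L.Structure M] (h : P → M) : DiagramFact L P → Prop
  | fn f x => h (funMap f x) = funMap f (h ∘ x)
  | rel R x _ => RelMap R (h ∘ x)

noncomputable def support [DecidableEq P] : DiagramFact L P → Finset P
  | fn f x => insert (funMap f x) (Finset.univ.image x)
  | rel _ x _ => Finset.univ.image x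

theorem holds_id (t : DiagramFact L P) : t.Holds id := by
  cases t with
  | fn f x => rfl
  | rel R x h => exact h

theorem holds_congr [DecidableEq P] {M : Type w'} [L.Structure M] {h h' : P → M}
    {t : DiagramFact L P} (hh : ∀ p ∈ t.support, h p = h' p) : t.Holds h ↔ t.Holds h' := by
  have hx : ∀ {l} (x : Fin l → P), (∀ p ∈ Finset.univ.image x, h p = h' p) → h ∘ x = h' ∘ x :=
    fun x hx => funext fun j => hx _ (Finset.mem_image_of_mem x (Finset.mem_univ j))
  cases t with
  | fn f x =>
    simp only [support, Finset.mem_insert, forall_eq_or_imp] at hh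
    simp only [Holds, hh.1, hx x hh.2]
  | rel R x _ => simp only [Holds, hx x hh]

def toPosForm {n : ℕ} (idx : P → Fin n) : DiagramFact L P → PosForm L n
  | fn f x => .equal (.func f fun j => .var (idx (x j))) (.var (idx (funMap f x)))
  | rel R x _ => .rel R fun j => .var (idx (x j))

theorem realize_toPosForm {M : Type w'} [L.Structure M] {n : ℕ} (idx : P → Fin n)
    (t : DiagramFact L P) (v : Fin n → M) : (t.toPosForm idx).Realize v ↔ t.Holds (v ∘ idx) := by
  cases t with
  | fn f x => exact eq_comm
  | rel R x _ => rfl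

end DiagramFact

variable {P M : Type (max u v)} [L.Structure P] [L.Structure M]

open Classical in
theorem exists_holds_of_posTheory_subset (hPM : posTheory (L := L) P ⊆ posTheory M) (p₀ : P)
    (i : Finset (DiagramFact L P)) : ∃ h : P → M, ∀ t ∈ i, t.Holds h := by
  set S := i.sup DiagramFact.support
  -- the extra last variable receives the elements outside `S`
  let idx (p : P) : Fin (S.card + 1) :=
    if hp : p ∈ S then (S.equivFin ⟨p, hp⟩).castSucc else Fin.last _
  let a : Fin (S.card + 1) → P := Fin.snoc (fun j => (S.equivFin.symm j).1) p₀
  have ha : ∀ p ∈ S, a (idx p) = p := fun p hp => by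
    simp only [idx, a, dif_pos hp, Fin.snoc_castSucc, Equiv.symm_apply_apply]
  -- `x₀ = x₀` stands in for the empty conjunction, which positive logic lacks
  let φ := (i.toList.map (DiagramFact.toPosForm idx)).foldr PosForm.and (.equal (.var 0) (.var 0))
  have hφ : φ.Realize a := by
    refine (PosForm.realize_foldr_and _ _ _).2 ⟨?_, rfl⟩
    simp only [List.mem_map, Finset.mem_toList, forall_exists_index, and_imp]
    rintro _ t ht rfl
    rw [DiagramFact.realize_toPosForm, DiagramFact.holds_congr (h' := id)]
    · exact t.holds_id
    · exact fun p hp => ha p (Finset.mem_sup.2 ⟨t, ht, hp⟩)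
  obtain ⟨b, hb⟩ := exists_realize_of_posTheory_subset_s14 hPM hφ
  refine ⟨b ∘ idx, fun t ht => ?_⟩
  rw [← DiagramFact.realize_toPosForm]
  exact (PosForm.realize_foldr_and _ _ _).1 hb |>.1 _ (List.mem_map_of_mem (Finset.mem_toList.2 ht))

theorem nonempty_hom_of_isEmpty [IsEmpty P] (hPM : posTheory (L := L) P ⊆ posTheory M) :
    Nonempty (P →[L] M) := by
  refine ⟨⟨isEmptyElim, fun f x => isEmptyElim (funMap f x), fun {n} R x hx => ?_⟩⟩
  -- `x` can only exist for `n = 0`, and then `R x` is a positive sentence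
  let σ : PosForm L 0 := .rel R fun j => isEmptyElim (x j)
  have hval : ∀ {Q : Type (max u v)} [L.Structure Q] (y : Fin n → Q),
      (fun j => ((isEmptyElim (x j) : L.Term (Fin 0))).realize (Fin.elim0 : Fin 0 → Q)) = y :=
    fun _ => funext fun j => isEmptyElim (x j)
  have hσ : σ ∈ posTheory P := show RelMap R _ by rwa [hval x]
  have := hPM hσ
  exact show RelMap R _ by rwa [← hval (isEmptyElim ∘ x)]

theorem exists_continuation (hPM : posTheory (L := L) P ⊆ posTheory M) :
    ∃ (C : Type (max u v)) (_ : L.Structure C),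
      TiStar (L := L) M ⊆ TiStar C ∧ posTheory (L := L) M ⊆ posTheory C ∧
        Nonempty (P →[L] C) := by
  rcases isEmpty_or_nonempty P with hP | ⟨⟨p₀⟩⟩
  · exact ⟨M, _, subset_rfl, subset_rfl, nonempty_hom_of_isEmpty hPM⟩
  have : Nonempty M := by
    obtain ⟨w, -⟩ := exists_realize_of_posTheory_subset_s14 hPM
      (φ := (.equal (.var 0) (.var 0) : PosForm L 1)) (v := fun _ => p₀) rfl
    exact ⟨w 0⟩
  choose H hH using exists_holds_of_posTheory_subset hPM p₀
  let U : Ultrafilter (Finset (DiagramFact L P)) := .of Filter.atTop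
  have hUH (t : DiagramFact L P) : ∀ᶠ i in (U : Filter _), t.Holds (H i) :=
    ((Filter.eventually_ge_atTop {t}).filter_mono (Ultrafilter.of_le _)).mono
      fun i hi => hH i t (Finset.singleton_subset_iff.1 hi)
  refine ⟨(U : Filter (Finset (DiagramFact L P))).Product fun _ => M, inferInstance,
    fun s hs => HInd.realize_ultrapower U M hs, fun σ hσ => (posRealize_ultrapower_iff U M σ).2 hσ,
    ⟨⟨fun p => ((H · p) : (U : Filter (Finset (DiagramFact L P))).Product fun _ => M), ?_, ?_⟩⟩⟩
  · intro n f x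
    exact (Quotient.sound' (hUH (.fn f x))).trans
      (Ultraproduct.funMap_cast f fun j i => H i (x j)).symm
  · intro n R x hx
    exact (relMap_quotient_mk' _ R _).2 (hUH (.rel R x hx))

theorem posTheory_subset_of_isPC {S : Set (HInd L)} {Q : Type (max u v)} [L.Structure Q]
    (hQ : IsPC S Q) (hM : HModels M S) (hQM : posTheory (L := L) Q ⊆ posTheory M) :
    posTheory (L := L) M ⊆ posTheory Q := by
  obtain ⟨C, _, hMC, hposMC, ⟨g⟩⟩ := exists_continuation hQM
  exact hposMC.trans (IsImmersion.posTheory_subset (hQ.2 C (fun s hs => hMC (hM s hs)) g))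

end Continuation

/-- pc models of `T_i*(A)` versus pc models of `T`, for a pc model
`A` of `T`. -/
theorem pc_of_TiStar (T : Set (HInd L)) (A : Type (max u v)) [L.Structure A]
    (hA : IsPC T A) :
    (∀ (B : Type (max u v)) [L.Structure B], IsPC (TiStar (L := L) A) B → IsPC T B) ∧
    (∀ (B : Type (max u v)) [L.Structure B],
        IsPC T B → HModels B (TiStar (L := L) A) → IsPC (TiStar (L := L) A) B) := by
  refine ⟨fun B _ hB => ⟨hB.1.mono hA.1, fun N _ hN f => ?_⟩,
    fun B _ hB hBA => hB.of_subset hA.1 hBA⟩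
  have hBA : posTheory (L := L) B ⊆ posTheory A := posTheory_subset_of_models_TiStar hB.1
  have hAB : posTheory (L := L) A ⊆ posTheory B :=
    posTheory_subset_of_isPC hB (fun _ hs => hs) hBA
  have hNA : posTheory (L := L) N ⊆ posTheory A :=
    posTheory_subset_of_isPC hA hN (hAB.trans (posTheory_subset_of_hom f))
  obtain ⟨D, _, hAD, -, ⟨g⟩⟩ := exists_continuation hNA
  exact @IsImmersion.of_comp _ _ _ _ _ _ _ f g (hB.2 D (fun _ hs => hAD hs) (g.comp f))

end PositiveLogic
end

section
/- Every pc model G of the theory T_g⁺ = (theory of groups) ∪ {a ≠ e}, in the language of groups expanded by a constant a, is a simple group. -/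
open FirstOrder FirstOrder.Language

universe u v w w'

namespace PositiveLogic

variable {L : FirstOrder.Language.{u, v}}

/-- The function symbols of the language of groups with an extra constant `a`. -/
inductive GroupFunc : ℕ → Type
  | mul : GroupFunc 2
  | inv : GroupFunc 1
  | one : GroupFunc 0
  | aconst : GroupFunc 0

/-- The language of groups `(·, ⁻¹, e)` expanded by a constant symbol `a`. -/
def Lg : FirstOrder.Language.{0, 0} :=
  ⟨GroupFunc, fun _ => Empty⟩

/-- Term-building helpers. -/
def tmul {α : Type} (t u : Lg.Term α) : Lg.Term α :=
  FirstOrder.Language.Term.func (GroupFunc.mul : Lg.Functions 2) ![t, u]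

def tinv {α : Type} (t : Lg.Term α) : Lg.Term α :=
  FirstOrder.Language.Term.func (GroupFunc.inv : Lg.Functions 1) ![t]

def tone {α : Type} : Lg.Term α :=
  FirstOrder.Language.Term.func (GroupFunc.one : Lg.Functions 0) ![]

def ta {α : Type} : Lg.Term α :=
  FirstOrder.Language.Term.func (GroupFunc.aconst : Lg.Functions 0) ![]

open FirstOrder.Language.Term in
/-- `T_g⁺`: the h-inductive theory of groups together with `a ≠ e`
(expressed h-inductively as `(a = e) → ⊥`). -/
def Tgplus : Set (HInd Lg) :=
  { -- associativity
    ⟨3, PosForm.equal (var 0) (var 0),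
      PosForm.equal (tmul (tmul (var 0) (var 1)) (var 2))
        (tmul (var 0) (tmul (var 1) (var 2)))⟩,
    -- left and right identity
    ⟨1, PosForm.equal (var 0) (var 0), PosForm.equal (tmul tone (var 0)) (var 0)⟩,
    ⟨1, PosForm.equal (var 0) (var 0), PosForm.equal (tmul (var 0) tone) (var 0)⟩,
    -- left and right inverse
    ⟨1, PosForm.equal (var 0) (var 0), PosForm.equal (tmul (tinv (var 0)) (var 0)) tone⟩,
    ⟨1, PosForm.equal (var 0) (var 0), PosForm.equal (tmul (var 0) (tinv (var 0))) tone⟩,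
    -- a ≠ e
    ⟨0, PosForm.equal ta tone, PosForm.falsum⟩ }

end PositiveLogic

/-!
A homomorphism out of a pc model reflects positive formulas, so it suffices to map `G` into a
model of `T_g⁺` in which "`h` is a product of two conjugates of `g`" holds for all `g ≠ 1`.
The target is `Sym(G × ℤ)`, with `G` acting by left multiplication on the first factor. There
`g` becomes a permutation all of whose cycles have length `ord g ≠ 1`, and `h` one with all
cycles of length `ord h`, both with `|G × ℤ|` cycles; such permutations are determined up to
conjugacy by these two numbers. So it is enough to find, on a countable set, permutations `X` and
`Y` with all cycles of length `c ≠ 1` whose product has all cycles of length `d`: on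
`(ℤ/c →₀ ℤ/d) × ℤ/c` take `X (v, k) = (v, k + 1)` and `Y = P X⁻¹ P⁻¹` with
`P (v, k) = (v + δ_{k+1}, k)`, so that `X Y (v, k) = (v + δ_k - δ_{k+1}, k)`.
-/

open scoped Cardinal

instance ZMod.instCountable (n : ℕ) : Countable (ZMod n) := by
  cases n
  exacts [inferInstanceAs (Countable ℤ), inferInstance]

namespace Equiv.Perm

variable {α β : Type u}

/-- Every cycle of `π` has length `e` (every cycle is infinite when `e = 0`). -/
def IsUniform (π : Perm α) (e : ℕ) : Prop :=
  ∀ (x : α) (m : ℤ), (π ^ m) x = x ↔ (e : ℤ) ∣ m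

abbrev Cycles (π : Perm α) : Type u := Quotient (SameCycle.setoid π)

theorem sameCycle_out_mk (π : Perm α) (x : α) :
    SameCycle π (Quotient.mk (SameCycle.setoid π) x).out x :=
  Quotient.mk_out (s := SameCycle.setoid π) x

theorem permCongr_eq_of_semiconj {σ : Perm β} {π : Perm α} (F : β ≃ α)
    (h : Function.Semiconj F σ π) : F.permCongr σ = π := by
  ext x
  obtain ⟨p, rfl⟩ := F.surjective x
  simp [h p]

theorem isUniform_of_pow {π : Perm α} {e : ℕ} (h : ∀ (x : α) (m : ℕ), (π ^ m) x = x ↔ e ∣ m) :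
    IsUniform π e := by
  intro x m
  rcases Int.natAbs_eq m with hm | hm <;> rw [hm]
  · rw [zpow_natCast, h, Int.natCast_dvd_natCast]
  · rw [zpow_neg, zpow_natCast, inv_eq_iff_eq, eq_comm, h, Int.dvd_neg, Int.natCast_dvd_natCast]

namespace IsUniform

variable {π : Perm α} {e : ℕ}

theorem inv (h : IsUniform π e) : IsUniform π⁻¹ e := fun x m => by
  rw [inv_zpow', h, Int.dvd_neg]

theorem conj (h : IsUniform π e) (w : Perm α) : IsUniform (w * π * w⁻¹) e := fun x m => by
  rw [conj_zpow, mul_apply, mul_apply, ← eq_inv_iff_eq, h]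

theorem zpow_apply_eq_zpow_apply_iff (h : IsUniform π e) {x : α} {a b : ℤ} :
    (π ^ a) x = (π ^ b) x ↔ (a : ZMod e) = b := by
  have hb : π ^ b = π ^ a * π ^ (b - a) := by rw [← zpow_add, add_sub_cancel]
  rw [ZMod.intCast_eq_intCast_iff_dvd_sub, ← h x, hb, mul_apply, (π ^ a).injective.eq_iff,
    eq_comm]

theorem exists_semiconj_shift (h : IsUniform π e) :
    ∃ F : Cycles π × ZMod e ≃ α,
      Function.Semiconj F (prodCongr (Equiv.refl _) (Equiv.addRight 1)) π := by
  let ψ : Cycles π × ZMod e → α := fun p => (π ^ (p.2.cast : ℤ)) p.1.out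
  have hψ_intCast (q : Cycles π) (m : ℤ) : ψ (q, m) = (π ^ m) q.out :=
    h.zpow_apply_eq_zpow_apply_iff.2 (ZMod.intCast_zmod_cast _)
  have hψ_mk (p : Cycles π × ZMod e) : Quotient.mk (SameCycle.setoid π) (ψ p) = p.1 :=
    (Quotient.sound (SameCycle.symm ⟨_, rfl⟩)).trans p.1.out_eq
  have hψ : Function.Bijective ψ := by
    refine ⟨fun ⟨q, k⟩ ⟨q', k'⟩ hqk => ?_, fun x => ?_⟩
    · obtain rfl : q = q' := by
        simpa only [hψ_mk] using congrArg (Quotient.mk (SameCycle.setoid π)) hqk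
      rw [← ZMod.intCast_zmod_cast k, ← ZMod.intCast_zmod_cast k']
      exact Prod.ext rfl (h.zpow_apply_eq_zpow_apply_iff.1 hqk)
    · obtain ⟨m, hm⟩ := sameCycle_out_mk π x
      exact ⟨(_, m), (hψ_intCast _ m).trans hm⟩
  refine ⟨.ofBijective ψ hψ, fun ⟨q, k⟩ => ?_⟩
  rw [← ZMod.intCast_zmod_cast k]
  simp only [ofBijective_apply, prodCongr_apply, Prod.map, coe_refl, id, coe_addRight]
  rw [← Int.cast_one, ← Int.cast_add, hψ_intCast, hψ_intCast, add_comm, zpow_add, zpow_one,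
    mul_apply]

theorem exists_permCongr_eq {σ : Perm β} (hπ : IsUniform π e) (hσ : IsUniform σ e)
    (hcard : #(Cycles π) = #(Cycles σ)) : ∃ F : α ≃ β, F.permCongr π = σ := by
  obtain ⟨Fπ, hFπ⟩ := hπ.exists_semiconj_shift
  obtain ⟨Fσ, hFσ⟩ := hσ.exists_semiconj_shift
  obtain ⟨E⟩ := Cardinal.eq.1 hcard
  refine ⟨Fπ.symm.trans ((prodCongr E (Equiv.refl _)).trans Fσ), permCongr_eq_of_semiconj _ ?_⟩
  intro x
  obtain ⟨⟨q, k⟩, rfl⟩ := Fπ.surjective x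
  simp [← hFπ (q, k), ← hFσ (E q, k)]

end IsUniform

def prodReflHom (W : Type*) : Perm α →* Perm (α × W) where
  toFun π := prodCongr π (Equiv.refl W)
  map_one' := rfl
  map_mul' _ _ := rfl

@[simp]
theorem prodReflHom_apply (W : Type*) (π : Perm α) (x : α) (w : W) :
    prodReflHom W π (x, w) = (π x, w) :=
  rfl

theorem prodReflHom_zpow_apply (W : Type*) (π : Perm α) (m : ℤ) (x : α) (w : W) :
    (prodReflHom W π ^ m) (x, w) = ((π ^ m) x, w) := by
  rw [← map_zpow]
  rfl

theorem IsUniform.prodRefl {π : Perm α} {e : ℕ} (h : IsUniform π e) (W : Type*) :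
    IsUniform (prodReflHom W π) e := fun ⟨x, w⟩ m => by
  rw [prodReflHom_zpow_apply, Prod.ext_iff, h x m, and_iff_left rfl]

theorem mk_cycles_prodRefl {W : Type v} (π : Perm α) :
    #(Cycles (prodReflHom W π)) = Cardinal.lift.{v} #(Cycles π) * Cardinal.lift.{u} #W := by
  have hr : ∀ p p' : α × W, SameCycle (prodReflHom W π) p p' ↔
      ((SameCycle.setoid π).prod ⊥) p p' := by
    rintro ⟨x, w⟩ ⟨x', w'⟩
    simp only [SameCycle, prodReflHom_zpow_apply, Prod.ext_iff, exists_and_right]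
    rfl
  rw [← Cardinal.mk_prod]
  exact Cardinal.mk_congr <| (Quotient.congr (Equiv.refl _) hr).trans
    ((Setoid.prodQuotientEquiv _ _).symm.trans (prodCongr (Equiv.refl _) Setoid.quotientBotEquiv))

theorem mk_cycles_prodRefl_of_countable {W : Type v} [Countable α] [Nonempty α] [Infinite W]
    (π : Perm α) : #(Cycles (prodReflHom W π)) = Cardinal.lift.{u} #W := by
  rw [mk_cycles_prodRefl]
  refine Cardinal.mul_eq_right (by simp) ?_ ?_
  · exact (Cardinal.lift_le_aleph0.2 Cardinal.mk_le_aleph0).trans (by simp)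
  · have : Nonempty (Cycles π) := Nonempty.map (Quotient.mk _) ‹_›
    simp

theorem mk_cycles_mul_aleph0 (π : Perm α) : #(Cycles π) * ℵ₀ = #α * ℵ₀ := by
  refine le_antisymm (mul_le_mul_left Cardinal.mk_quotient_le _) ?_
  have hsurj : Function.Surjective fun p : Cycles π × ℤ => (π ^ p.2) p.1.out := fun x =>
    let ⟨m, hm⟩ := sameCycle_out_mk π x
    ⟨(_, m), hm⟩
  calc #α * ℵ₀ ≤ #(Cycles π × ℤ) * ℵ₀ := mul_le_mul_left (Cardinal.mk_le_of_surjective hsurj) _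
    _ = #(Cycles π) * ℵ₀ := by simp [mul_assoc]

theorem mk_cycles_prodRefl_int (π : Perm α) : #(Cycles (prodReflHom ℤ π)) = #(α × ℤ) := by
  rw [mk_cycles_prodRefl, Cardinal.mk_prod]
  simpa using mk_cycles_mul_aleph0 π

theorem isUniform_addRight {A : Type u} [AddGroup A] (a : A) :
    IsUniform (Equiv.addRight a) (addOrderOf a) := fun x m => by
  rw [zsmul_addRight, addOrderOf_dvd_iff_zsmul_eq_zero]
  exact add_eq_left

theorem isUniform_toPerm {G : Type u} [Group G] (g : G) :
    IsUniform (MulAction.toPerm g : Perm G) (orderOf g) := fun x m => by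
  rw [← MulAction.toPermHom_apply, ← map_zpow, MulAction.toPermHom_apply, MulAction.toPerm_apply,
    smul_eq_mul, mul_eq_right, orderOf_dvd_iff_zpow_eq_one]

def addFiber {V K : Type*} [AddGroup V] (b : K → V) : Perm (V × K) where
  toFun p := (p.1 + b p.2, p.2)
  invFun p := (p.1 - b p.2, p.2)
  left_inv p := by simp
  right_inv p := by simp

theorem addFiber_pow_apply {V K : Type*} [AddGroup V] (b : K → V) (m : ℕ) (v : V) (k : K) :
    (addFiber b ^ m) (v, k) = (v + m • b k, k) := by
  induction m with
  | zero => simp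
  | succ m ih => rw [pow_succ', mul_apply, ih, succ_nsmul, ← add_assoc]; rfl

theorem isUniform_addFiber {V K : Type*} [AddGroup V] {b : K → V} {d : ℕ}
    (hb : ∀ k (m : ℕ), m • b k = 0 ↔ d ∣ m) : IsUniform (addFiber b) d :=
  isUniform_of_pow fun ⟨v, k⟩ m => by
    rw [addFiber_pow_apply, Prod.mk.injEq, and_iff_left rfl, add_eq_left, hb]

theorem exists_conj_mul_conj_eq {Ω : Type u} [Infinite Ω] {σ τ : Perm Ω} {c d : ℕ} (hc : c ≠ 1)
    (hσ : IsUniform σ c) (hτ : IsUniform τ d) (hσΩ : #(Cycles σ) = #Ω)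
    (hτΩ : #(Cycles τ) = #Ω) :
    ∃ w₁ w₂ : Perm Ω, τ = w₁ * σ * w₁⁻¹ * (w₂ * σ * w₂⁻¹) := by
  let X : Perm ((ZMod c →₀ ZMod d) × ZMod c) := Equiv.addRight (0, 1)
  let P := addFiber fun k : ZMod c => Finsupp.single (k + 1) (1 : ZMod d)
  let T := addFiber fun k : ZMod c => Finsupp.single k (1 : ZMod d) - Finsupp.single (k + 1) 1
  have hXPT : X * (P * X⁻¹ * P⁻¹) = T := by
    refine Equiv.ext fun ⟨v, k⟩ => Prod.ext ?_ ?_ <;>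
      simp only [X, P, T, addFiber, neg_addRight, Prod.neg_mk, neg_zero, coe_mul, coe_addRight,
        coe_fn_mk, coe_inv, symm_mk, Function.comp_apply, Prod.mk_add_mk, add_zero,
        neg_add_cancel_right]
    abel
  have hX : IsUniform X c := by
    simpa [X, Prod.addOrderOf] using isUniform_addRight ((0, 1) : (ZMod c →₀ ZMod d) × ZMod c)
  have hT : IsUniform T d := isUniform_addFiber fun k m => by
    have : Nontrivial (ZMod c) := ZMod.nontrivial_iff.2 hc
    have hk : k ≠ k + 1 := by simp
    simp [smul_sub, sub_eq_zero, Finsupp.single_eq_single_iff, hk, ZMod.natCast_eq_zero_iff]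
  have hcard (π : Perm ((ZMod c →₀ ZMod d) × ZMod c)) : #(Cycles (prodReflHom Ω π)) = #Ω := by
    simp [mk_cycles_prodRefl_of_countable]
  obtain ⟨F, hF⟩ := (hT.prodRefl Ω).exists_permCongr_eq hτ ((hcard T).trans hτΩ.symm)
  obtain ⟨E₁, hE₁⟩ := (hX.prodRefl Ω).exists_permCongr_eq hσ ((hcard X).trans hσΩ.symm)
  obtain ⟨E₂, hE₂⟩ := ((hX.inv.conj P).prodRefl Ω).exists_permCongr_eq hσ
    ((hcard _).trans hσΩ.symm)
  refine ⟨E₁.symm.trans F, E₂.symm.trans F, ?_⟩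
  rw [← hF, ← hXPT, map_mul, permCongr_mul]
  nth_rw 1 [← hE₁]
  rw [← hE₂]
  ext x
  simp

variable {G : Type u} [Group G]

variable (G) in
/-- The factor `ℤ` gives every element as many cycles as `G × ℤ` has points. -/
def cayleyProdInt : G →* Perm (G × ℤ) :=
  (prodReflHom ℤ).comp (MulAction.toPermHom G G)

theorem cayleyProdInt_ne_one {g : G} (hg : g ≠ 1) : cayleyProdInt G g ≠ 1 := fun h =>
  hg (by simpa [cayleyProdInt] using congrArg (fun π => (π (1, 0)).1) h)

theorem exists_cayleyProdInt_eq_conj_mul_conj {g : G} (hg : g ≠ 1) (h : G) :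
    ∃ w₁ w₂ : Perm (G × ℤ), cayleyProdInt G h =
      w₁ * cayleyProdInt G g * w₁⁻¹ * (w₂ * cayleyProdInt G g * w₂⁻¹) :=
  exists_conj_mul_conj_eq (mt orderOf_eq_one_iff.1 hg) ((isUniform_toPerm g).prodRefl ℤ)
    ((isUniform_toPerm h).prodRefl ℤ) (mk_cycles_prodRefl_int _) (mk_cycles_prodRefl_int _)

end Equiv.Perm

theorem IsSimpleGroup.of_forall_eq_conj_mul_conj {G : Type*} [Group G] [Nontrivial G]
    (h : ∀ g : G, g ≠ 1 → ∀ x, ∃ u v, x = u * g * u⁻¹ * (v * g * v⁻¹)) : IsSimpleGroup G :=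
  ⟨fun N hN => or_iff_not_imp_left.2 fun hbot => by
    obtain ⟨⟨g, hgN⟩, hg⟩ := Subgroup.ne_bot_iff_exists_ne_one.1 hbot
    refine N.eq_top_iff'.2 fun x => ?_
    obtain ⟨u, v, rfl⟩ := h g (by simpa using hg) x
    exact N.mul_mem (hN.conj_mem g hgN u) (hN.conj_mem g hgN v)⟩

namespace PositiveLogic

open Structure Equiv.Perm

abbrev constA (M : Type) [Lg.Structure M] : M :=
  funMap (L := Lg) (GroupFunc.aconst : Lg.Functions 0) ![]

abbrev lgStructure (H : Type) [Group H] (a : H) : Lg.Structure H where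
  funMap {n} f := match n, f with
    | _, GroupFunc.mul => fun v => v 0 * v 1
    | _, GroupFunc.inv => fun v => (v 0)⁻¹
    | _, GroupFunc.one => fun _ => 1
    | _, GroupFunc.aconst => fun _ => a
  RelMap r := Empty.elim r

structure InterpretsGroup (M : Type) [Lg.Structure M] [Group M] : Prop where
  mul_eq : ∀ x y : M, x * y = funMap (L := Lg) (GroupFunc.mul : Lg.Functions 2) ![x, y]
  inv_eq : ∀ x : M, x⁻¹ = funMap (L := Lg) (GroupFunc.inv : Lg.Functions 1) ![x]
  one_eq : (1 : M) = funMap (L := Lg) (GroupFunc.one : Lg.Functions 0) ![]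

theorem funMap_aconst {M : Type} [Lg.Structure M] (x : Fin 0 → M) :
    funMap (L := Lg) (GroupFunc.aconst : Lg.Functions 0) x = constA M :=
  congrArg _ (Subsingleton.elim _ _)

theorem realize_ta {M : Type} [Lg.Structure M] {n : ℕ} (v : Fin n → M) :
    (ta : Lg.Term (Fin n)).realize v = constA M :=
  funMap_aconst _

open Term in
/-- `∃ u w, x₁ = (u x₀ u⁻¹) (w x₀ w⁻¹)`. -/
def isProdTwoConj : PosForm Lg 2 :=
  .ex (.ex (.equal (var 1) (tmul (tmul (tmul (var 2) (var 0)) (tinv (var 2)))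
    (tmul (tmul (var 3) (var 0)) (tinv (var 3))))))

namespace InterpretsGroup

variable {M N : Type} [Lg.Structure M] [Group M] [Lg.Structure N] [Group N]

theorem funMap_mul (hM : InterpretsGroup M) (x : Fin 2 → M) :
    funMap (L := Lg) (GroupFunc.mul : Lg.Functions 2) x = x 0 * x 1 :=
  (congrArg _ (funext (Fin.forall_fin_two.2 ⟨rfl, rfl⟩) : x = ![x 0, x 1])).trans
    (hM.mul_eq _ _).symm

theorem funMap_inv (hM : InterpretsGroup M) (x : Fin 1 → M) :
    funMap (L := Lg) (GroupFunc.inv : Lg.Functions 1) x = (x 0)⁻¹ :=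
  (congrArg _ (funext (Fin.forall_fin_one.2 rfl) : x = ![x 0])).trans (hM.inv_eq _).symm

theorem funMap_one (hM : InterpretsGroup M) (x : Fin 0 → M) :
    funMap (L := Lg) (GroupFunc.one : Lg.Functions 0) x = 1 :=
  (congrArg _ (Subsingleton.elim _ _)).trans hM.one_eq.symm

variable {n : ℕ} (v : Fin n → M)

theorem realize_tmul (hM : InterpretsGroup M) (t u : Lg.Term (Fin n)) :
    (tmul t u).realize v = t.realize v * u.realize v :=
  hM.funMap_mul _

theorem realize_tinv (hM : InterpretsGroup M) (t : Lg.Term (Fin n)) :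
    (tinv t).realize v = (t.realize v)⁻¹ :=
  hM.funMap_inv _

theorem realize_tone (hM : InterpretsGroup M) : (tone : Lg.Term (Fin n)).realize v = 1 :=
  hM.funMap_one _

theorem hModels_Tgplus_iff (hM : InterpretsGroup M) : HModels M Tgplus ↔ constA M ≠ 1 := by
  refine ⟨fun h ha => h ⟨0, .equal ta tone, .falsum⟩ (by simp [Tgplus]) Fin.elim0 ?_, ?_⟩
  · simp [PosForm.Realize, realize_ta, hM.realize_tone, ha]
  · intro ha s hs
    simp only [Tgplus, Set.mem_insert_iff, Set.mem_singleton_iff] at hs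
    rcases hs with rfl | rfl | rfl | rfl | rfl | rfl <;> intro v <;>
      simp [PosForm.Realize, hM.realize_tmul, hM.realize_tinv, hM.realize_tone,
        realize_ta, mul_assoc, ha]

theorem realize_isProdTwoConj (hM : InterpretsGroup M) (v : Fin 2 → M) :
    isProdTwoConj.Realize v ↔ ∃ u w, v 1 = u * v 0 * u⁻¹ * (w * v 0 * w⁻¹) := by
  simp [isProdTwoConj, PosForm.Realize, hM.realize_tmul, hM.realize_tinv, Fin.snoc]

def toHom (hM : InterpretsGroup M) (hN : InterpretsGroup N) (f : M →* N)
    (ha : f (constA M) = constA N) : M →[Lg] N where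
  toFun := f
  map_fun' {_} F x := by
    cases F
    · simp [hM.funMap_mul, hN.funMap_mul]
    · simp [hM.funMap_inv, hN.funMap_inv]
    · simp [hM.funMap_one, hN.funMap_one]
    · simp [funMap_aconst, ha]
  map_rel' r := Empty.elim r

end InterpretsGroup

/-- every pc model of `T_g⁺` is a simple group (with respect to the
group structure induced by the interpretation of the language). -/
theorem pc_model_of_Tgplus_isSimpleGroup (G : Type) [Lg.Structure G]
    (hG : IsPC Tgplus G) [Group G]
    (hmul : ∀ x y : G, x * y = FirstOrder.Language.Structure.funMap (L := Lg) (M := G)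
      (GroupFunc.mul : Lg.Functions 2) ![x, y])
    (hone : (1 : G) = FirstOrder.Language.Structure.funMap (L := Lg) (M := G)
      (GroupFunc.one : Lg.Functions 0) ![])
    (hinv : ∀ x : G, x⁻¹ = FirstOrder.Language.Structure.funMap (L := Lg) (M := G)
      (GroupFunc.inv : Lg.Functions 1) ![x]) :
    IsSimpleGroup G := by
  have hGrp : InterpretsGroup G := ⟨hmul, hinv, hone⟩
  have ha : constA G ≠ 1 := hGrp.hModels_Tgplus_iff.1 hG.1
  let : Lg.Structure (Equiv.Perm (G × ℤ)) := lgStructure _ (cayleyProdInt G (constA G))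
  have hPerm : InterpretsGroup (Equiv.Perm (G × ℤ)) := ⟨fun _ _ => rfl, fun _ => rfl, rfl⟩
  have hreflect := hG.2 _ (hPerm.hModels_Tgplus_iff.2 (cayleyProdInt_ne_one ha))
    (hGrp.toHom hPerm (cayleyProdInt G) rfl) isProdTwoConj
  have : Nontrivial G := ⟨⟨_, _, ha⟩⟩
  refine IsSimpleGroup.of_forall_eq_conj_mul_conj fun g hg h => ?_
  have hconj := (hreflect ![g, h]).2 <| (hPerm.realize_isProdTwoConj _).2 <|
    exists_cayleyProdInt_eq_conj_mul_conj hg h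
  simpa using (hGrp.realize_isProdTwoConj _).1 hconj

end PositiveLogic
end
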